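/- arXiv:2506.14708 — 2 statements merged into one kernel-verified Lean document; each statement's English description precedes it below -/
import Mathlib

section
/- Let (s̲₁,s̲₂,s̄₁,s̄₂) ∈ 𝔻 and i, j ∈ {−1,0,1}. Then t^{(−1,i)}(s̲₁,s̲₂,s̄₁,s̄₂) ∩ t^{(1,j)}(s̲₁,s̲₂,s̲₁,s̄₂) = ∅. -/
open Set

/-- Membership of a price quadruple (s̲₁,s̲₂,s̄₁,s̄₂) in the domain 𝔻. -/
def memD (s1 s2 b1 b2 : ℝ) : Prop := 0 < s1 ∧ s1 ≤ b1 ∧ 0 < s2 ∧ s2 ≤ b2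

/-- Admissible strategies 𝔸(x,y₁,y₂,s̲₁,s̲₂,s̄₁,s̄₂); an element q = (l₁,l₂,m₁,m₂). -/
def A (x y1 y2 s1 s2 b1 b2 : ℝ) : Set (ℝ × ℝ × ℝ × ℝ) :=
  {q | 0 ≤ q.1 ∧ 0 ≤ q.2.1 ∧ 0 ≤ q.2.2.1 ∧ 0 ≤ q.2.2.2 ∧
       0 ≤ x + s1 * q.2.2.1 + s2 * q.2.2.2 - b1 * q.1 - b2 * q.2.1 ∧
       0 ≤ y1 - q.2.2.1 + q.1 ∧ 0 ≤ y2 - q.2.2.2 + q.2.1 ∧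
       q.2.2.1 ≤ y1 ∧ q.2.2.2 ≤ y2}

/-- The function φ: utility of the post-transaction position, where g is the (static) utility. -/
noncomputable def phi (g : ℝ → ℝ → ℝ → ℝ) (x y1 y2 s1 s2 b1 b2 : ℝ)
    (q : ℝ × ℝ × ℝ × ℝ) : ℝ :=
  g (x + s1 * q.2.2.1 + s2 * q.2.2.2 - b1 * q.1 - b2 * q.2.1)
    (y1 - q.2.2.1 + q.1) (y2 - q.2.2.2 + q.2.1)

/-- The static value function Φ = sup of φ over admissible strategies. -/
noncomputable def Phi (g : ℝ → ℝ → ℝ → ℝ) (x y1 y2 s1 s2 b1 b2 : ℝ) : ℝ :=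
  sSup (phi g x y1 y2 s1 s2 b1 b2 '' A x y1 y2 s1 s2 b1 b2)

/-- The set 𝔸^{(i₁,i₂)}: admissible strategies with prescribed signs of l₁−m₁, l₂−m₂ and
no simultaneous buy-and-sell. -/
def Asgn (i1 i2 : ℝ) (x y1 y2 s1 s2 b1 b2 : ℝ) : Set (ℝ × ℝ × ℝ × ℝ) :=
  {q | q ∈ A x y1 y2 s1 s2 b1 b2 ∧ i1 = Real.sign (q.1 - q.2.2.1) ∧
       i2 = Real.sign (q.2.1 - q.2.2.2) ∧ q.1 * q.2.2.1 + q.2.1 * q.2.2.2 = 0}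

/-- The trading set 𝐭^{(i₁,i₂)}(s̲₁,s̲₂,s̄₁,s̄₂) ⊆ ℝ₊ × ℝ₊². -/
def tset (g : ℝ → ℝ → ℝ → ℝ) (i1 i2 s1 s2 b1 b2 : ℝ) : Set (ℝ × ℝ × ℝ) :=
  {v | 0 ≤ v.1 ∧ 0 ≤ v.2.1 ∧ 0 ≤ v.2.2 ∧
       ∃ q ∈ Asgn i1 i2 v.1 v.2.1 v.2.2 s1 s2 b1 b2,
         Phi g v.1 v.2.1 v.2.2 s1 s2 b1 b2 = phi g v.1 v.2.1 v.2.2 s1 s2 b1 b2 q}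

/-- The parameter domain ℝ₊ × ℝ₊² × 𝔻, as a subset of ℝ⁷;
a point is p = (x, y₁, y₂, s̲₁, s̲₂, s̄₁, s̄₂). -/
def Param : Set (ℝ × ℝ × ℝ × ℝ × ℝ × ℝ × ℝ) :=
  {p | 0 ≤ p.1 ∧ 0 ≤ p.2.1 ∧ 0 ≤ p.2.2.1 ∧
       memD p.2.2.2.1 p.2.2.2.2.1 p.2.2.2.2.2.1 p.2.2.2.2.2.2}

/-- 𝔸 as a function of the bundled parameter. -/
def AP (p : ℝ × ℝ × ℝ × ℝ × ℝ × ℝ × ℝ) : Set (ℝ × ℝ × ℝ × ℝ) :=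
  A p.1 p.2.1 p.2.2.1 p.2.2.2.1 p.2.2.2.2.1 p.2.2.2.2.2.1 p.2.2.2.2.2.2

/-- φ as a function of the bundled parameter. -/
noncomputable def phiP (g : ℝ → ℝ → ℝ → ℝ) (p : ℝ × ℝ × ℝ × ℝ × ℝ × ℝ × ℝ)
    (q : ℝ × ℝ × ℝ × ℝ) : ℝ :=
  phi g p.1 p.2.1 p.2.2.1 p.2.2.2.1 p.2.2.2.2.1 p.2.2.2.2.2.1 p.2.2.2.2.2.2 q

/-- Φ as a function of the bundled parameter. -/
noncomputable def PhiP (g : ℝ → ℝ → ℝ → ℝ) (p : ℝ × ℝ × ℝ × ℝ × ℝ × ℝ × ℝ) : ℝ :=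
  Phi g p.1 p.2.1 p.2.2.1 p.2.2.2.1 p.2.2.2.2.1 p.2.2.2.2.2.1 p.2.2.2.2.2.2

lemma sign_eq_neg_one {t : ℝ} (h : Real.sign t = -1) : t < 0 := by
  rcases lt_trichotomy t 0 with h' | h' | h'
  · exact h'
  · rw [h', Real.sign_zero] at h; norm_num at h
  · rw [Real.sign_of_pos h'] at h; norm_num at h

lemma sign_eq_one {t : ℝ} (h : Real.sign t = 1) : 0 < t := by
  rcases lt_trichotomy t 0 with h' | h' | h'
  · rw [Real.sign_of_neg h'] at h; norm_num at h
  · rw [h', Real.sign_zero] at h; norm_num at h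
  · exact h'

lemma gmono (g : ℝ → ℝ → ℝ → ℝ)
    (hg1 : ∀ a aQ b c : ℝ, 0 ≤ a → 0 ≤ b → 0 ≤ c → a < aQ → g a b c < g aQ b c)
    (hg2 : ∀ a b bQ c : ℝ, 0 ≤ a → 0 ≤ b → 0 ≤ c → b < bQ → g a b c < g a bQ c)
    (hg3 : ∀ a b c cQ : ℝ, 0 ≤ a → 0 ≤ b → 0 ≤ c → c < cQ → g a b c < g a b cQ)
    {a b c a' b' c' : ℝ} (ha : 0 ≤ a) (hb : 0 ≤ b) (hc : 0 ≤ c)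
    (ha' : a ≤ a') (hb' : b ≤ b') (hc' : c ≤ c') : g a b c ≤ g a' b' c' := by
  have h1 : g a b c ≤ g a' b c := by
    rcases eq_or_lt_of_le ha' with h | h
    · rw [h]
    · exact (hg1 a a' b c ha hb hc h).le
  have h2 : g a' b c ≤ g a' b' c := by
    rcases eq_or_lt_of_le hb' with h | h
    · rw [h]
    · exact (hg2 a' b b' c (le_trans ha ha') hb hc h).le
  have h3 : g a' b' c ≤ g a' b' c' := by
    rcases eq_or_lt_of_le hc' with h | h
    · rw [h]
    · exact (hg3 a' b' c c' (le_trans ha ha') (le_trans hb hb') hc h).le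
  linarith

lemma bddA (g : ℝ → ℝ → ℝ → ℝ)
    (hg1 : ∀ a aQ b c : ℝ, 0 ≤ a → 0 ≤ b → 0 ≤ c → a < aQ → g a b c < g aQ b c)
    (hg2 : ∀ a b bQ c : ℝ, 0 ≤ a → 0 ≤ b → 0 ≤ c → b < bQ → g a b c < g a bQ c)
    (hg3 : ∀ a b c cQ : ℝ, 0 ≤ a → 0 ≤ b → 0 ≤ c → c < cQ → g a b c < g a b cQ)
    (x y1 y2 s1 s2 b1 b2 : ℝ) (hx : 0 ≤ x) (hy1 : 0 ≤ y1) (hy2 : 0 ≤ y2)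
    (hs1 : 0 < s1) (hs2 : 0 < s2) (hb1 : 0 < b1) (hb2 : 0 < b2) :
    BddAbove (phi g x y1 y2 s1 s2 b1 b2 '' A x y1 y2 s1 s2 b1 b2) := by
  set M : ℝ := x + s1 * y1 + s2 * y2 with hM
  refine ⟨g M (y1 + M / b1) (y2 + M / b2), ?_⟩
  rintro z ⟨⟨l1, l2, m1, m2⟩, hq, rfl⟩
  obtain ⟨hl1, hl2, hm1, hm2, hw, hh1, hh2, hm1y, hm2y⟩ := hq
  dsimp only at hl1 hl2 hm1 hm2 hw hh1 hh2 hm1y hm2y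
  simp only [phi]
  have hsm1 : s1 * m1 ≤ s1 * y1 := mul_le_mul_of_nonneg_left hm1y hs1.le
  have hsm2 : s2 * m2 ≤ s2 * y2 := mul_le_mul_of_nonneg_left hm2y hs2.le
  have hbl1 : 0 ≤ b1 * l1 := mul_nonneg hb1.le hl1
  have hbl2 : 0 ≤ b2 * l2 := mul_nonneg hb2.le hl2
  have hl1M : l1 ≤ M / b1 := by
    rw [le_div_iff₀ hb1]; nlinarith
  have hl2M : l2 ≤ M / b2 := by
    rw [le_div_iff₀ hb2]; nlinarith
  refine gmono g hg1 hg2 hg3 (by linarith) (by linarith) (by linarith)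
    (by linarith) (by linarith) (by linarith)

set_option maxHeartbeats 1000000 in
/-- 𝐭^{(−1,i)}(s̲₁,s̲₂,s̄₁,s̄₂) ∩ 𝐭^{(1,j)}(s̲₁,s̲₂,s̲₁,s̄₂) = ∅. -/
theorem statement15
    (g : ℝ → ℝ → ℝ → ℝ)
    (hg : StrictConcaveOn ℝ {v : ℝ × ℝ × ℝ | 0 ≤ v.1 ∧ 0 ≤ v.2.1 ∧ 0 ≤ v.2.2}
      (fun v => g v.1 v.2.1 v.2.2))
    (hg1 : ∀ a aQ b c : ℝ, 0 ≤ a → 0 ≤ b → 0 ≤ c → a < aQ → g a b c < g aQ b c)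
    (hg2 : ∀ a b bQ c : ℝ, 0 ≤ a → 0 ≤ b → 0 ≤ c → b < bQ → g a b c < g a bQ c)
    (hg3 : ∀ a b c cQ : ℝ, 0 ≤ a → 0 ≤ b → 0 ≤ c → c < cQ → g a b c < g a b cQ)
    (s1 s2 b1 b2 : ℝ) (hD : memD s1 s2 b1 b2)
    (i j : ℝ) (hi : i ∈ ({-1, 0, 1} : Set ℝ)) (hj : j ∈ ({-1, 0, 1} : Set ℝ)) :
    tset g (-1) i s1 s2 b1 b2 ∩ tset g 1 j s1 s2 s1 b2 = ∅ := by
  obtain ⟨hs1, hs1b1, hs2, hs2b2⟩ := hD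
  have hb1 : 0 < b1 := lt_of_lt_of_le hs1 hs1b1
  have hb2 : 0 < b2 := lt_of_lt_of_le hs2 hs2b2
  rw [eq_empty_iff_forall_notMem]
  rintro ⟨x, y1, y2⟩ ⟨⟨hx, hy1, hy2, ⟨l1, l2, m1, m2⟩, ⟨hqA, hsgn1, _, hcmp⟩, hPhi⟩,
    ⟨_, _, _, ⟨L1, L2, M1, M2⟩, ⟨hQA, hSgn1, _, hCmp⟩, hPhi'⟩⟩
  obtain ⟨hl1, hl2, hm1, hm2, hw, hh1, hh2, hm1y, hm2y⟩ := hqA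
  obtain ⟨hL1, hL2, hM1, hM2, hW, hH1, hH2, hM1y, hM2y⟩ := hQA
  try dsimp only at hx
  try dsimp only at hy1
  try dsimp only at hy2
  try dsimp only at hl1
  try dsimp only at hl2
  try dsimp only at hm1
  try dsimp only at hm2
  try dsimp only at hw
  try dsimp only at hh1
  try dsimp only at hh2
  try dsimp only at hm1y
  try dsimp only at hm2y
  try dsimp only at hL1
  try dsimp only at hL2
  try dsimp only at hM1
  try dsimp only at hM2
  try dsimp only at hW
  try dsimp only at hH1
  try dsimp only at hH2
  try dsimp only at hM1y
  try dsimp only at hM2y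
  try dsimp only at hsgn1
  try dsimp only at hSgn1
  try dsimp only at hcmp
  try dsimp only at hCmp
  try dsimp only at hPhi
  try dsimp only at hPhi'
  -- sign information
  have hlm : l1 - m1 < 0 := sign_eq_neg_one hsgn1.symm
  have hLM : 0 < L1 - M1 := sign_eq_one hSgn1.symm
  have hm1pos : 0 < m1 := by linarith
  have hL1pos : 0 < L1 := by linarith
  have hl1z : l1 = 0 := by
    by_contra h
    have h1 : 0 < l1 * m1 := mul_pos (lt_of_le_of_ne hl1 (Ne.symm h)) hm1pos
    nlinarith [mul_nonneg hl2 hm2]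
  have hM1z : M1 = 0 := by
    by_contra h
    have h1 : 0 < L1 * M1 := mul_pos hL1pos (lt_of_le_of_ne hM1 (Ne.symm h))
    nlinarith [mul_nonneg hL2 hM2]
  subst hl1z hM1z
  -- the mixing weight, as an opaque variable
  obtain ⟨lam, hlamdef⟩ : ∃ t : ℝ, t = m1 / (m1 + L1) := ⟨_, rfl⟩
  have hden : 0 < m1 + L1 := by linarith
  have hlam0 : 0 < lam := hlamdef ▸ div_pos hm1pos hden
  have hlam1 : lam < 1 := hlamdef ▸ (div_lt_one hden).2 (by linarith)
  have h1lam : 0 ≤ 1 - lam := by linarith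
  have hkey : (1 - lam) * m1 = lam * L1 := by
    rw [hlamdef]; field_simp; ring
  -- combined asset-2 trades
  obtain ⟨L2h, hL2h⟩ : ∃ t : ℝ, t = (1 - lam) * l2 + lam * L2 := ⟨_, rfl⟩
  obtain ⟨M2h, hM2h⟩ : ∃ t : ℝ, t = (1 - lam) * m2 + lam * M2 := ⟨_, rfl⟩
  -- positions
  have hvqmem : ((x + s1 * m1 + s2 * m2 - b2 * l2, y1 - m1, y2 - m2 + l2) : ℝ × ℝ × ℝ)
      ∈ {v : ℝ × ℝ × ℝ | 0 ≤ v.1 ∧ 0 ≤ v.2.1 ∧ 0 ≤ v.2.2} :=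
    ⟨by dsimp only; linarith, by dsimp only; linarith, by dsimp only; linarith⟩
  have hvQmem : ((x + s2 * M2 - s1 * L1 - b2 * L2, y1 + L1, y2 - M2 + L2) : ℝ × ℝ × ℝ)
      ∈ {v : ℝ × ℝ × ℝ | 0 ≤ v.1 ∧ 0 ≤ v.2.1 ∧ 0 ≤ v.2.2} :=
    ⟨by dsimp only; linarith, by dsimp only; linarith, by dsimp only; linarith⟩
  have hne : ((x + s1 * m1 + s2 * m2 - b2 * l2, y1 - m1, y2 - m2 + l2) : ℝ × ℝ × ℝ)
      ≠ (x + s2 * M2 - s1 * L1 - b2 * L2, y1 + L1, y2 - M2 + L2) := by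
    intro h
    have h2 := congrArg (fun v : ℝ × ℝ × ℝ => v.2.1) h
    dsimp only at h2
    linarith
  have hconc := hg.2 hvqmem hvQmem hne (by linarith : (0:ℝ) < 1 - lam) hlam0 (by ring)
  have hcomb : (1 - lam) • ((x + s1 * m1 + s2 * m2 - b2 * l2, y1 - m1, y2 - m2 + l2) : ℝ × ℝ × ℝ)
      + lam • ((x + s2 * M2 - s1 * L1 - b2 * L2, y1 + L1, y2 - M2 + L2) : ℝ × ℝ × ℝ)
      = ((x + s2 * M2h - b2 * L2h, y1, y2 - M2h + L2h) : ℝ × ℝ × ℝ) := by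
    simp only [Prod.smul_mk, smul_eq_mul, Prod.mk_add_mk, Prod.mk.injEq, hL2h, hM2h]
    refine ⟨by linear_combination s1 * hkey, by linear_combination -hkey, by ring⟩
  rw [hcomb] at hconc
  simp only [smul_eq_mul] at hconc
  -- hconc : (1-lam) * g vq + lam * g vQ < g (x + s2*M2h - b2*L2h) y1 (y2 - M2h + L2h)
  -- nonnegativity facts for the combined strategy
  have hL2h0 : 0 ≤ L2h := by
    have h1 := mul_nonneg h1lam hl2
    have h2 := mul_nonneg hlam0.le hL2
    rw [hL2h]; linarith
  have hM2h0 : 0 ≤ M2h := by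
    have h1 := mul_nonneg h1lam hm2
    have h2 := mul_nonneg hlam0.le hM2
    rw [hM2h]; linarith
  have hwealth : 0 ≤ x + s2 * M2h - b2 * L2h := by
    have h1 := mul_nonneg h1lam (by linarith : (0:ℝ) ≤ x + s1 * m1 + s2 * m2 - b2 * l2)
    have h2 := mul_nonneg hlam0.le (by linarith : (0:ℝ) ≤ x + s2 * M2 - s1 * L1 - b2 * L2)
    have h3 : x + s2 * M2h - b2 * L2h
        = (1 - lam) * (x + s1 * m1 + s2 * m2 - b2 * l2)
          + lam * (x + s2 * M2 - s1 * L1 - b2 * L2) := by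
      rw [hM2h, hL2h]; linear_combination -s1 * hkey
    linarith
  have hhold2 : 0 ≤ y2 - M2h + L2h := by
    have h1 := mul_nonneg h1lam (by linarith : (0:ℝ) ≤ y2 - m2 + l2)
    have h2 := mul_nonneg hlam0.le (by linarith : (0:ℝ) ≤ y2 - M2 + L2)
    have h3 : y2 - M2h + L2h = (1 - lam) * (y2 - m2 + l2) + lam * (y2 - M2 + L2) := by
      rw [hM2h, hL2h]; ring
    linarith
  have hM2hy : M2h ≤ y2 := by
    have h1 := mul_le_mul_of_nonneg_left hm2y h1lam
    have h2 := mul_le_mul_of_nonneg_left hM2y hlam0.le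
    rw [hM2h]; linarith
  -- the cancelled strategy q̂ is admissible in both systems
  have hQhA : ∀ B1 : ℝ, ((0, L2h, 0, M2h) : ℝ × ℝ × ℝ × ℝ) ∈ A x y1 y2 s1 s2 B1 b2 := by
    intro B1
    simp only [A, Set.mem_setOf_eq]
    refine ⟨le_refl 0, hL2h0, le_refl 0, hM2h0, by linarith, by linarith, by linarith,
      by linarith, by linarith⟩
  -- its value, in either system
  have hphival : ∀ B1 : ℝ, phi g x y1 y2 s1 s2 B1 b2 ((0, L2h, 0, M2h) : ℝ × ℝ × ℝ × ℝ)
      = g (x + s2 * M2h - b2 * L2h) y1 (y2 - M2h + L2h) := by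
    intro B1
    simp only [phi]
    norm_num
  -- the value of q̂ is at most either optimum
  have hVle1 : g (x + s2 * M2h - b2 * L2h) y1 (y2 - M2h + L2h)
      ≤ g (x + s1 * m1 + s2 * m2 - b2 * l2) (y1 - m1) (y2 - m2 + l2) := by
    have h := le_csSup (bddA g hg1 hg2 hg3 x y1 y2 s1 s2 b1 b2 hx hy1 hy2 hs1 hs2 hb1 hb2)
      (Set.mem_image_of_mem _ (hQhA b1))
    rw [hphival b1] at h
    rw [show sSup (phi g x y1 y2 s1 s2 b1 b2 '' A x y1 y2 s1 s2 b1 b2)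
        = Phi g x y1 y2 s1 s2 b1 b2 from rfl, hPhi] at h
    simp only [phi] at h
    norm_num at h
    exact h
  have hVle2 : g (x + s2 * M2h - b2 * L2h) y1 (y2 - M2h + L2h)
      ≤ g (x + s2 * M2 - s1 * L1 - b2 * L2) (y1 + L1) (y2 - M2 + L2) := by
    have h := le_csSup (bddA g hg1 hg2 hg3 x y1 y2 s1 s2 s1 b2 hx hy1 hy2 hs1 hs2 hs1 hb2)
      (Set.mem_image_of_mem _ (hQhA s1))
    rw [hphival s1] at h
    rw [show sSup (phi g x y1 y2 s1 s2 s1 b2 '' A x y1 y2 s1 s2 s1 b2)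
        = Phi g x y1 y2 s1 s2 s1 b2 from rfl, hPhi'] at h
    simp only [phi] at h
    norm_num at h
    exact h
  -- contradiction
  have hA := mul_le_mul_of_nonneg_left hVle1 h1lam
  have hB := mul_le_mul_of_nonneg_left hVle2 hlam0.le
  try dsimp only at hconc
  linarith
end

section
/- For (s̲₁,s̲₂,s̄₁,s̄₂) ∈ 𝔻 and i ∈ {−1,0,1} one has the equality of selling zones t^{(−1,i)}(s̲₁,s̲₂,s̄₁,s̄₂) = t^{(−1,i)}(s̲₁,s̲₂,s̲₁,s̄₂). -/
open Set

-- ===== auxiliary lemmas =====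

lemma neg_one_eq_sign' {t : ℝ} (h : (-1 : ℝ) = Real.sign t) : t < 0 := by
  rcases lt_trichotomy t 0 with h'|h'|h'
  · exact h'
  · subst h'; simp at h
  · rw [Real.sign_of_pos h'] at h; norm_num at h

section gmono
variable {g : ℝ → ℝ → ℝ → ℝ}
lemma gmono1 (hg1 : ∀ a aQ b c : ℝ, 0 ≤ a → 0 ≤ b → 0 ≤ c → a < aQ → g a b c < g aQ b c)
    {a a' b c : ℝ} (ha : 0 ≤ a) (hb : 0 ≤ b) (hc : 0 ≤ c) (h : a ≤ a') :
    g a b c ≤ g a' b c := by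
  rcases h.eq_or_lt with rfl|h
  · exact le_refl _
  · exact (hg1 a a' b c ha hb hc h).le

lemma gmono2 (hg2 : ∀ a b bQ c : ℝ, 0 ≤ a → 0 ≤ b → 0 ≤ c → b < bQ → g a b c < g a bQ c)
    {a b b' c : ℝ} (ha : 0 ≤ a) (hb : 0 ≤ b) (hc : 0 ≤ c) (h : b ≤ b') :
    g a b c ≤ g a b' c := by
  rcases h.eq_or_lt with rfl|h
  · exact le_refl _
  · exact (hg2 a b b' c ha hb hc h).le

lemma gmono3 (hg3 : ∀ a b c cQ : ℝ, 0 ≤ a → 0 ≤ b → 0 ≤ c → c < cQ → g a b c < g a b cQ)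
    {a b c c' : ℝ} (ha : 0 ≤ a) (hb : 0 ≤ b) (hc : 0 ≤ c) (h : c ≤ c') :
    g a b c ≤ g a b c' := by
  rcases h.eq_or_lt with rfl|h
  · exact le_refl _
  · exact (hg3 a b c c' ha hb hc h).le
end gmono

/-- Upper bound on `phi` over `A`. -/
lemma phi_bdd (g : ℝ → ℝ → ℝ → ℝ)
    (hg : ConcaveOn ℝ {v : ℝ × ℝ × ℝ | 0 ≤ v.1 ∧ 0 ≤ v.2.1 ∧ 0 ≤ v.2.2}
      (fun v => g v.1 v.2.1 v.2.2))
    (hg1 : ∀ a aQ b c : ℝ, 0 ≤ a → 0 ≤ b → 0 ≤ c → a < aQ → g a b c < g aQ b c)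
    (hg2 : ∀ a b bQ c : ℝ, 0 ≤ a → 0 ≤ b → 0 ≤ c → b < bQ → g a b c < g a bQ c)
    (hg3 : ∀ a b c cQ : ℝ, 0 ≤ a → 0 ≤ b → 0 ≤ c → c < cQ → g a b c < g a b cQ)
    (x y1 y2 s1 s2 b1 b2 : ℝ) (hx : 0 ≤ x) (hy1 : 0 ≤ y1) (hy2 : 0 ≤ y2)
    (hs1 : 0 < s1) (hs2 : 0 < s2) (hb1 : 0 < b1) (hb2 : 0 < b2) :
    BddAbove (phi g x y1 y2 s1 s2 b1 b2 '' A x y1 y2 s1 s2 b1 b2) := by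
  set M0 : ℝ := x + s1 * y1 + s2 * y2 with hM0
  set M1 : ℝ := y1 + M0 / b1 with hM1
  set M2 : ℝ := y2 + M0 / b2 with hM2
  have hM0n : 0 ≤ M0 := by positivity
  have hM1n : 0 ≤ M1 := by positivity
  have hM2n : 0 ≤ M2 := by positivity
  refine ⟨2 * g (M0/2) (M1/2) (M2/2) - g 0 0 0, ?_⟩
  rintro z ⟨q, hq, rfl⟩
  obtain ⟨hl1, hl2, hm1, hm2, hw, hp1, hp2, hm1y, hm2y⟩ := hq
  set w : ℝ := x + s1 * q.2.2.1 + s2 * q.2.2.2 - b1 * q.1 - b2 * q.2.1 with hwdef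
  set p1 : ℝ := y1 - q.2.2.1 + q.1 with hp1def
  set p2 : ℝ := y2 - q.2.2.2 + q.2.1 with hp2def
  have hwM : w ≤ M0 := by
    rw [hwdef, hM0]
    nlinarith [mul_nonneg hb1.le hl1, mul_nonneg hb2.le hl2]
  have hl1M : q.1 ≤ M0 / b1 := by
    rw [le_div_iff₀ hb1]
    nlinarith [mul_nonneg hb2.le hl2]
  have hl2M : q.2.1 ≤ M0 / b2 := by
    rw [le_div_iff₀ hb2]
    nlinarith [mul_nonneg hb1.le hl1]
  have hp1M : p1 ≤ M1 := by rw [hp1def, hM1]; linarith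
  have hp2M : p2 ≤ M2 := by rw [hp2def, hM2]; linarith
  have hu : ((w, p1, p2) : ℝ × ℝ × ℝ) ∈
      {v : ℝ × ℝ × ℝ | 0 ≤ v.1 ∧ 0 ≤ v.2.1 ∧ 0 ≤ v.2.2} := ⟨hw, hp1, hp2⟩
  have hu' : ((M0 - w, M1 - p1, M2 - p2) : ℝ × ℝ × ℝ) ∈
      {v : ℝ × ℝ × ℝ | 0 ≤ v.1 ∧ 0 ≤ v.2.1 ∧ 0 ≤ v.2.2} :=
    ⟨by simpa using hwM, by simpa using hp1M, by simpa using hp2M⟩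
  have hconc := hg.2 hu hu' (by norm_num : (0:ℝ) ≤ 1/2) (by norm_num : (0:ℝ) ≤ 1/2)
      (by norm_num)
  have hmid : ((1/2 : ℝ) • ((w, p1, p2) : ℝ × ℝ × ℝ)
      + (1/2 : ℝ) • ((M0 - w, M1 - p1, M2 - p2) : ℝ × ℝ × ℝ))
      = ((M0/2, M1/2, M2/2) : ℝ × ℝ × ℝ) := by
    simp [Prod.ext_iff, smul_eq_mul]
    constructor <;> [skip; constructor] <;> ring
  rw [hmid] at hconc
  have hlow : g 0 0 0 ≤ g (M0 - w) (M1 - p1) (M2 - p2) := by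
    calc g 0 0 0 ≤ g (M0 - w) 0 0 := gmono1 hg1 le_rfl le_rfl le_rfl (by linarith)
      _ ≤ g (M0 - w) (M1 - p1) 0 := gmono2 hg2 (by linarith) le_rfl le_rfl (by linarith)
      _ ≤ g (M0 - w) (M1 - p1) (M2 - p2) :=
        gmono3 hg3 (by linarith) (by linarith) le_rfl (by linarith)
  simp only [smul_eq_mul] at hconc
  show g w p1 p2 ≤ _
  linarith [hconc]

lemma zero_mem_A {x y1 y2 s1 s2 b1 b2 : ℝ} (hx : 0 ≤ x) (hy1 : 0 ≤ y1) (hy2 : 0 ≤ y2) :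
    ((0,0,0,0) : ℝ×ℝ×ℝ×ℝ) ∈ A x y1 y2 s1 s2 b1 b2 := by
  refine ⟨le_rfl, le_rfl, le_rfl, le_rfl, ?_, ?_, ?_, hy1, hy2⟩ <;> simp <;> linarith

lemma A_sub {x y1 y2 s1 s2 b1 b2 : ℝ} (hs1b : s1 ≤ b1) :
    A x y1 y2 s1 s2 b1 b2 ⊆ A x y1 y2 s1 s2 s1 b2 := by
  rintro q ⟨h1, h2, h3, h4, h5, h6, h7, h8, h9⟩
  refine ⟨h1, h2, h3, h4, ?_, h6, h7, h8, h9⟩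
  nlinarith [mul_nonneg (sub_nonneg.2 hs1b) h1]

lemma A_swap {x y1 y2 s1 s2 b1 b1' b2 l2 m1 m2 : ℝ}
    (h : ((0:ℝ),l2,m1,m2) ∈ A x y1 y2 s1 s2 b1 b2) :
    ((0:ℝ),l2,m1,m2) ∈ A x y1 y2 s1 s2 b1' b2 := by
  obtain ⟨h1, h2, h3, h4, h5, h6, h7, h8, h9⟩ := h
  refine ⟨h1, h2, h3, h4, ?_, h6, h7, h8, h9⟩
  simp only [mul_zero] at h5 ⊢
  exact h5

lemma phi_swap (g : ℝ → ℝ → ℝ → ℝ) {x y1 y2 s1 s2 b1 b1' b2 l2 m1 m2 : ℝ} :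
    phi g x y1 y2 s1 s2 b1 b2 ((0:ℝ),l2,m1,m2)
      = phi g x y1 y2 s1 s2 b1' b2 ((0:ℝ),l2,m1,m2) := by
  simp [phi]

/-- Monotonicity of `Phi` when the ask price of asset 1 drops to the bid price. -/
lemma Phi_mono (g : ℝ → ℝ → ℝ → ℝ)
    (hg : ConcaveOn ℝ {v : ℝ × ℝ × ℝ | 0 ≤ v.1 ∧ 0 ≤ v.2.1 ∧ 0 ≤ v.2.2}
      (fun v => g v.1 v.2.1 v.2.2))
    (hg1 : ∀ a aQ b c : ℝ, 0 ≤ a → 0 ≤ b → 0 ≤ c → a < aQ → g a b c < g aQ b c)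
    (hg2 : ∀ a b bQ c : ℝ, 0 ≤ a → 0 ≤ b → 0 ≤ c → b < bQ → g a b c < g a bQ c)
    (hg3 : ∀ a b c cQ : ℝ, 0 ≤ a → 0 ≤ b → 0 ≤ c → c < cQ → g a b c < g a b cQ)
    (x y1 y2 s1 s2 b1 b2 : ℝ) (hx : 0 ≤ x) (hy1 : 0 ≤ y1) (hy2 : 0 ≤ y2)
    (hs1 : 0 < s1) (hs2 : 0 < s2) (hs1b : s1 ≤ b1) (hb2 : 0 < b2) :
    Phi g x y1 y2 s1 s2 b1 b2 ≤ Phi g x y1 y2 s1 s2 s1 b2 := by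
  have hbddS := phi_bdd g hg hg1 hg2 hg3 x y1 y2 s1 s2 s1 b2 hx hy1 hy2 hs1 hs2 hs1 hb2
  refine csSup_le ⟨_, Set.mem_image_of_mem _ (zero_mem_A hx hy1 hy2)⟩ ?_
  rintro z ⟨q, hq, rfl⟩
  have hAs : q ∈ A x y1 y2 s1 s2 s1 b2 := A_sub hs1b hq
  obtain ⟨h1, h2, h3, h4, h5, h6, h7, h8, h9⟩ := hq
  have step1 : phi g x y1 y2 s1 s2 b1 b2 q ≤ phi g x y1 y2 s1 s2 s1 b2 q := by
    apply gmono1 hg1 h5 h6 h7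
    nlinarith [mul_nonneg (sub_nonneg.2 hs1b) h1]
  exact step1.trans (le_csSup hbddS (Set.mem_image_of_mem _ hAs))

lemma exists_lambda (m1 c : ℝ) (hm1 : 0 < m1) :
    ∃ a : ℝ, 0 < a ∧ a ≤ 1/2 ∧ 0 < m1 + a * c := by
  have hD : 0 < 2 * (m1 + |c|) := by positivity
  have habs0 : 0 ≤ |c| := abs_nonneg c
  have h1 : -|c| ≤ c := neg_abs_le c
  refine ⟨m1 / (2 * (m1 + |c|)), by positivity, ?_, ?_⟩
  · rw [div_le_iff₀ hD]; nlinarith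
  · have key : m1 / (2 * (m1 + |c|)) * |c| < m1 := by
      rw [div_mul_eq_mul_div, div_lt_iff₀ hD]; nlinarith
    have h2 : m1 / (2 * (m1 + |c|)) * (-|c|) ≤ m1 / (2 * (m1 + |c|)) * c := by
      apply mul_le_mul_of_nonneg_left h1 (by positivity)
    nlinarith

/-- Mixing a strictly better frictionless strategy with a pure sale of asset 1 yields an
admissible strategy in the original market that beats the pure sale. -/
lemma mix_lemma (g : ℝ → ℝ → ℝ → ℝ)
    (hgc : ConcaveOn ℝ {v : ℝ × ℝ × ℝ | 0 ≤ v.1 ∧ 0 ≤ v.2.1 ∧ 0 ≤ v.2.2}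
      (fun v => g v.1 v.2.1 v.2.2))
    (x y1 y2 s1 s2 b1 b2 : ℝ)
    (l2 m1 m2 l1' l2' m1' m2' : ℝ) (hm1 : 0 < m1)
    (hq : ((0:ℝ),l2,m1,m2) ∈ A x y1 y2 s1 s2 s1 b2)
    (hq' : (l1',l2',m1',m2') ∈ A x y1 y2 s1 s2 s1 b2)
    (hlt : phi g x y1 y2 s1 s2 s1 b2 ((0:ℝ),l2,m1,m2)
      < phi g x y1 y2 s1 s2 s1 b2 (l1',l2',m1',m2')) :
    ∃ r ∈ A x y1 y2 s1 s2 b1 b2,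
      phi g x y1 y2 s1 s2 s1 b2 ((0:ℝ),l2,m1,m2) < phi g x y1 y2 s1 s2 b1 b2 r := by
  simp only [A, Set.mem_setOf_eq] at hq hq'
  obtain ⟨-, h2, h3, h4, h5, h6, h7, h8, h9⟩ := hq
  obtain ⟨h1', h2', h3', h4', h5', h6', h7', h8', h9'⟩ := hq'
  obtain ⟨a, ha0, ha1, hpos⟩ := exists_lambda m1 ((m1' - l1') - m1) hm1
  have hb0 : 0 ≤ 1 - a := by linarith
  -- concavity along the segment
  have hWmem : ((x + s1 * m1 + s2 * m2 - s1 * 0 - b2 * l2, y1 - m1 + 0, y2 - m2 + l2)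
      : ℝ × ℝ × ℝ) ∈ {v : ℝ × ℝ × ℝ | 0 ≤ v.1 ∧ 0 ≤ v.2.1 ∧ 0 ≤ v.2.2} := ⟨h5, h6, h7⟩
  have hW'mem : ((x + s1 * m1' + s2 * m2' - s1 * l1' - b2 * l2', y1 - m1' + l1', y2 - m2' + l2')
      : ℝ × ℝ × ℝ) ∈ {v : ℝ × ℝ × ℝ | 0 ≤ v.1 ∧ 0 ≤ v.2.1 ∧ 0 ≤ v.2.2} :=
    ⟨h5', h6', h7'⟩
  have hconc := hgc.2 hW'mem hWmem ha0.le hb0 (by ring)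
  simp only [Prod.smul_mk, smul_eq_mul, Prod.mk_add_mk] at hconc
  -- the mixed, normalized pure-sale strategy
  refine ⟨(0, a*l2' + (1-a)*l2, a*m1' + (1-a)*m1 - a*l1', a*m2' + (1-a)*m2), ?_, ?_⟩
  · refine ⟨le_rfl, ?_, ?_, ?_, ?_, ?_, ?_, ?_, ?_⟩
    · show (0:ℝ) ≤ a*l2' + (1-a)*l2
      linarith [mul_nonneg ha0.le h2', mul_nonneg hb0 h2]
    · show (0:ℝ) ≤ a*m1' + (1-a)*m1 - a*l1'
      linarith [hpos, mul_pos ha0 hm1]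
    · show (0:ℝ) ≤ a*m2' + (1-a)*m2
      linarith [mul_nonneg ha0.le h4', mul_nonneg hb0 h4]
    · show (0:ℝ) ≤ x + s1 * (a*m1' + (1-a)*m1 - a*l1') + s2 * (a*m2' + (1-a)*m2)
        - b1 * 0 - b2 * (a*l2' + (1-a)*l2)
      linarith [mul_nonneg ha0.le h5', mul_nonneg hb0 h5]
    · show (0:ℝ) ≤ y1 - (a*m1' + (1-a)*m1 - a*l1') + 0
      linarith [mul_nonneg ha0.le h6', mul_nonneg hb0 h6]
    · show (0:ℝ) ≤ y2 - (a*m2' + (1-a)*m2) + (a*l2' + (1-a)*l2)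
      linarith [mul_nonneg ha0.le h7', mul_nonneg hb0 h7]
    · show a*m1' + (1-a)*m1 - a*l1' ≤ y1
      linarith [mul_nonneg ha0.le h1', mul_le_mul_of_nonneg_left h8' ha0.le,
        mul_le_mul_of_nonneg_left h8 hb0]
    · show a*m2' + (1-a)*m2 ≤ y2
      linarith [mul_le_mul_of_nonneg_left h9' ha0.le, mul_le_mul_of_nonneg_left h9 hb0]
  · show phi g x y1 y2 s1 s2 s1 b2 ((0:ℝ),l2,m1,m2)
      < g (x + s1 * (a*m1' + (1-a)*m1 - a*l1') + s2 * (a*m2' + (1-a)*m2)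
            - b1 * 0 - b2 * (a*l2' + (1-a)*l2))
          (y1 - (a*m1' + (1-a)*m1 - a*l1') + 0)
          (y2 - (a*m2' + (1-a)*m2) + (a*l2' + (1-a)*l2))
    rw [show x + s1 * (a*m1' + (1-a)*m1 - a*l1') + s2 * (a*m2' + (1-a)*m2)
            - b1 * 0 - b2 * (a*l2' + (1-a)*l2)
        = a * (x + s1 * m1' + s2 * m2' - s1 * l1' - b2 * l2')
          + (1-a) * (x + s1 * m1 + s2 * m2 - s1 * 0 - b2 * l2) from by ring,
      show y1 - (a*m1' + (1-a)*m1 - a*l1') + 0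
        = a * (y1 - m1' + l1') + (1-a) * (y1 - m1 + 0) from by ring,
      show y2 - (a*m2' + (1-a)*m2) + (a*l2' + (1-a)*l2)
        = a * (y2 - m2' + l2') + (1-a) * (y2 - m2 + l2) from by ring]
    have hphis : phi g x y1 y2 s1 s2 s1 b2 ((0:ℝ),l2,m1,m2)
        = g (x + s1 * m1 + s2 * m2 - s1 * 0 - b2 * l2) (y1 - m1 + 0) (y2 - m2 + l2) := rfl
    have hphis' : phi g x y1 y2 s1 s2 s1 b2 (l1',l2',m1',m2')
        = g (x + s1 * m1' + s2 * m2' - s1 * l1' - b2 * l2') (y1 - m1' + l1') (y2 - m2' + l2')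
        := rfl
    rw [hphis] at hlt ⊢
    rw [hphis'] at hlt
    linarith [hconc, mul_pos ha0 (sub_pos.2 hlt)]

/-- equality of selling zones 𝐭^{(−1,i)}(s̲₁,s̲₂,s̄₁,s̄₂) = 𝐭^{(−1,i)}(s̲₁,s̲₂,s̲₁,s̄₂). -/
theorem statement16
    (g : ℝ → ℝ → ℝ → ℝ)
    (hg : StrictConcaveOn ℝ {v : ℝ × ℝ × ℝ | 0 ≤ v.1 ∧ 0 ≤ v.2.1 ∧ 0 ≤ v.2.2}
      (fun v => g v.1 v.2.1 v.2.2))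
    (hg1 : ∀ a aQ b c : ℝ, 0 ≤ a → 0 ≤ b → 0 ≤ c → a < aQ → g a b c < g aQ b c)
    (hg2 : ∀ a b bQ c : ℝ, 0 ≤ a → 0 ≤ b → 0 ≤ c → b < bQ → g a b c < g a bQ c)
    (hg3 : ∀ a b c cQ : ℝ, 0 ≤ a → 0 ≤ b → 0 ≤ c → c < cQ → g a b c < g a b cQ)
    (s1 s2 b1 b2 : ℝ) (hD : memD s1 s2 b1 b2)
    (i : ℝ) (hi : i ∈ ({-1, 0, 1} : Set ℝ)) :
    tset g (-1) i s1 s2 b1 b2 = tset g (-1) i s1 s2 s1 b2 := by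
  obtain ⟨hs1, hs1b, hs2, hs2b⟩ := hD
  have hb1 : 0 < b1 := lt_of_lt_of_le hs1 hs1b
  have hb2 : 0 < b2 := lt_of_lt_of_le hs2 hs2b
  have hgc := hg.concaveOn
  ext v
  obtain ⟨x, y1, y2⟩ := v
  simp only [tset, Set.mem_setOf_eq]
  constructor
  · rintro ⟨hx, hy1, hy2, ⟨l1, l2, m1, m2⟩, ⟨hqA, hsgn1, hsgn2, hprod⟩, hPhi⟩
    refine ⟨hx, hy1, hy2, ?_⟩
    have hbddB := phi_bdd g hgc hg1 hg2 hg3 x y1 y2 s1 s2 b1 b2 hx hy1 hy2 hs1 hs2 hb1 hb2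
    have hbddS := phi_bdd g hgc hg1 hg2 hg3 x y1 y2 s1 s2 s1 b2 hx hy1 hy2 hs1 hs2 hs1 hb2
    obtain ⟨h1, h2, h3, h4, h5, h6, h7, h8, h9⟩ := hqA
    have hlm : l1 < m1 := by have := neg_one_eq_sign' hsgn1; linarith
    have hl1z : l1 = 0 := by nlinarith [mul_nonneg h2 h4]
    subst hl1z
    have hm1pos : 0 < m1 := hlm
    -- q is also admissible in the s-world, with the same phi value
    have hqA' : ((0:ℝ),l2,m1,m2) ∈ A x y1 y2 s1 s2 s1 b2 :=
      A_swap ⟨h1, h2, h3, h4, h5, h6, h7, h8, h9⟩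
    have hphieq : phi g x y1 y2 s1 s2 b1 b2 ((0:ℝ),l2,m1,m2)
        = phi g x y1 y2 s1 s2 s1 b2 ((0:ℝ),l2,m1,m2) := phi_swap g
    refine ⟨((0:ℝ),l2,m1,m2), ⟨hqA', hsgn1, hsgn2, hprod⟩, ?_⟩
    -- need : Phi_s = phi_s q
    have hge : phi g x y1 y2 s1 s2 s1 b2 ((0:ℝ),l2,m1,m2) ≤ Phi g x y1 y2 s1 s2 s1 b2 :=
      le_csSup hbddS (Set.mem_image_of_mem _ hqA')
    rcases hge.lt_or_eq with hlt | heq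
    · exfalso
      obtain ⟨z, hz, hzgt⟩ := exists_lt_of_lt_csSup
        ⟨_, Set.mem_image_of_mem _ (zero_mem_A (b1 := s1) hx hy1 hy2)⟩ hlt
      obtain ⟨⟨l1', l2', m1', m2'⟩, hq'A, rfl⟩ := hz
      obtain ⟨r, hrA, hrgt⟩ := mix_lemma g hgc x y1 y2 s1 s2 b1 b2 l2 m1 m2 l1' l2' m1' m2'
        hm1pos hqA' hq'A hzgt
      have hub : phi g x y1 y2 s1 s2 b1 b2 r ≤ Phi g x y1 y2 s1 s2 b1 b2 :=
        le_csSup hbddB (Set.mem_image_of_mem _ hrA)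
      rw [hPhi, hphieq] at hub
      linarith
    · exact heq.symm
  · rintro ⟨hx, hy1, hy2, ⟨l1, l2, m1, m2⟩, ⟨hqA, hsgn1, hsgn2, hprod⟩, hPhi⟩
    refine ⟨hx, hy1, hy2, ?_⟩
    have hbddB := phi_bdd g hgc hg1 hg2 hg3 x y1 y2 s1 s2 b1 b2 hx hy1 hy2 hs1 hs2 hb1 hb2
    obtain ⟨h1, h2, h3, h4, h5, h6, h7, h8, h9⟩ := hqA
    have hlm : l1 < m1 := by have := neg_one_eq_sign' hsgn1; linarith
    have hl1z : l1 = 0 := by nlinarith [mul_nonneg h2 h4]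
    subst hl1z
    have hqA' : ((0:ℝ),l2,m1,m2) ∈ A x y1 y2 s1 s2 b1 b2 :=
      A_swap ⟨h1, h2, h3, h4, h5, h6, h7, h8, h9⟩
    refine ⟨((0:ℝ),l2,m1,m2), ⟨hqA', hsgn1, hsgn2, hprod⟩, ?_⟩
    have hphieq : phi g x y1 y2 s1 s2 b1 b2 ((0:ℝ),l2,m1,m2)
        = phi g x y1 y2 s1 s2 s1 b2 ((0:ℝ),l2,m1,m2) := phi_swap g
    have hge : phi g x y1 y2 s1 s2 b1 b2 ((0:ℝ),l2,m1,m2) ≤ Phi g x y1 y2 s1 s2 b1 b2 :=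
      le_csSup hbddB (Set.mem_image_of_mem _ hqA')
    have hle : Phi g x y1 y2 s1 s2 b1 b2 ≤ Phi g x y1 y2 s1 s2 s1 b2 :=
      Phi_mono g hgc hg1 hg2 hg3 x y1 y2 s1 s2 b1 b2 hx hy1 hy2 hs1 hs2 hs1b hb2
    rw [hPhi, ← hphieq] at hle
    exact le_antisymm hle hge
end
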